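/- arXiv:1804.11089 — 2 statements merged into one kernel-verified Lean document; each statement's English description precedes it below -/
import Mathlib

section
/- A set 𝕡 of subsets of Σ* is a parameterization if and only if there exists a total function κ : Σ* → ℕ such that 𝕡 = K(κ). -/
/-!
Given a parameterization `𝕡` with cofinal sequence `P₀, P₁, …`, let `κ x` be the least `i` with
`x ∈ Pᵢ` (it exists since `{x} ∈ 𝕡`). The sublevel set `{κ ≤ c}` is `P₀ ∪ ⋯ ∪ P_c`, which lies in
`𝕡` and contains every member of `𝕡` for large `c`; so `𝕡` consists exactly of the sets on which
`κ` is bounded. Conversely, the sublevel sets of any `κ` form a countable cofinal family of `K(κ)`.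
-/

def Kpar {α : Type*} (κ : α → ℕ) : Set (Set α) :=
  {L | ∃ c : ℕ, ∀ x ∈ L, κ x ≤ c}

def IsParameterization {α : Type*} (𝕡 : Set (Set α)) : Prop :=
  (∀ P ∈ 𝕡, ∀ Q, Q ⊆ P → Q ∈ 𝕡) ∧
  (∀ A ∈ 𝕡, ∀ B ∈ 𝕡, A ∪ B ∈ 𝕡) ∧
  (∀ x : α, {x} ∈ 𝕡) ∧
  (∃ Pseq : ℕ → Set α, (∀ i, Pseq i ∈ 𝕡) ∧ ∀ P ∈ 𝕡, ∃ i, P ⊆ Pseq i)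

section

variable {α : Type*}

theorem mem_Kpar_iff {κ : α → ℕ} {L : Set α} : L ∈ Kpar κ ↔ ∃ c, L ⊆ {x | κ x ≤ c} :=
  Iff.rfl

theorem isParameterization_Kpar (κ : α → ℕ) : IsParameterization (Kpar κ) := by
  refine ⟨?_, ?_, ?_, fun c => {x | κ x ≤ c}, fun c => ⟨c, fun _ hx => hx⟩, fun _ hL => hL⟩
  · rintro P ⟨c, hc⟩ Q hQ
    exact ⟨c, fun x hx => hc x (hQ hx)⟩
  · rintro A ⟨c, hc⟩ B ⟨d, hd⟩
    refine ⟨max c d, fun x hx => ?_⟩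
    rcases hx with hA | hB
    · exact le_max_of_le_left (hc x hA)
    · exact le_max_of_le_right (hd x hB)
  · intro x
    exact ⟨κ x, fun y hy => (congrArg κ hy).le⟩

theorem accumulate_mem_of_union_mem {𝕡 : Set (Set α)}
    (hunion : ∀ A ∈ 𝕡, ∀ B ∈ 𝕡, A ∪ B ∈ 𝕡) {P : ℕ → Set α} (hP : ∀ i, P i ∈ 𝕡) :
    ∀ n, Set.accumulate P n ∈ 𝕡
  | 0 => by simpa using hP 0
  | n + 1 => by
    rw [Set.accumulate_succ]
    exact hunion _ (accumulate_mem_of_union_mem hunion hP n) _ (hP _)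

open Classical in
theorem exists_sublevel_eq_accumulate {P : ℕ → Set α} (hP : ∀ x, ∃ i, x ∈ P i) :
    ∃ κ : α → ℕ, ∀ c, {x | κ x ≤ c} = Set.accumulate P c :=
  ⟨fun x => Nat.find (hP x), fun c => by ext x; simp [Nat.find_le_iff, Set.mem_accumulate]⟩

theorem eq_Kpar_of_sublevel_eq_accumulate {𝕡 : Set (Set α)}
    (hsub : ∀ P ∈ 𝕡, ∀ Q, Q ⊆ P → Q ∈ 𝕡) (hunion : ∀ A ∈ 𝕡, ∀ B ∈ 𝕡, A ∪ B ∈ 𝕡)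
    {P : ℕ → Set α} (hP : ∀ i, P i ∈ 𝕡) (hcov : ∀ L ∈ 𝕡, ∃ i, L ⊆ P i) {κ : α → ℕ}
    (hκ : ∀ c, {x | κ x ≤ c} = Set.accumulate P c) : 𝕡 = Kpar κ := by
  ext L
  simp only [mem_Kpar_iff, hκ]
  constructor
  · intro hL
    obtain ⟨i, hi⟩ := hcov L hL
    exact ⟨i, hi.trans Set.subset_accumulate⟩
  · rintro ⟨c, hc⟩
    exact hsub _ (accumulate_mem_of_union_mem hunion hP c) L hc

end

theorem isParameterization_iff_exists_param_general {α : Type*}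
    (𝕡 : Set (Set α)) :
    IsParameterization 𝕡 ↔ ∃ κ : α → ℕ, 𝕡 = Kpar κ := by
  constructor
  · rintro ⟨hsub, hunion, hsing, P, hP, hcov⟩
    have hPcovers : ∀ x, ∃ i, x ∈ P i := fun x => (hcov {x} (hsing x)).imp fun _ hi => hi rfl
    obtain ⟨κ, hκ⟩ := exists_sublevel_eq_accumulate hPcovers
    exact ⟨κ, eq_Kpar_of_sublevel_eq_accumulate hsub hunion hP hcov hκ⟩
  · rintro ⟨κ, rfl⟩
    exact isParameterization_Kpar κ

theorem isParameterization_iff_exists_param {α : Type*} [Countable α]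
    (𝕡 : Set (Set α)) :
    IsParameterization 𝕡 ↔ ∃ κ : α → ℕ, 𝕡 = Kpar κ :=
  isParameterization_iff_exists_param_general 𝕡
end

section
/- Let 𝕡 be a parameterization over Σ. The set {complement of P : P ∈ 𝕡} is a parameterization if and only if 𝕡 equals the set of all subsets of Σ*. -/
theorem param_compl_iff {α : Type*} [Countable α] [Infinite α]
    (𝕡 : Set (Set α)) (h : IsParameterization 𝕡) :
    IsParameterization {Q : Set α | ∃ P ∈ 𝕡, Q = Pᶜ} ↔ 𝕡 = Set.univ := by
  constructor
  · rintro ⟨hsub, -, -, -⟩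
    obtain ⟨x⟩ : Nonempty α := inferInstance
    have hx : ({x}ᶜ : Set α) ∈ {Q : Set α | ∃ P ∈ 𝕡, Q = Pᶜ} :=
      ⟨{x}, h.2.2.1 x, rfl⟩
    have hemp : (∅ : Set α) ∈ {Q : Set α | ∃ P ∈ 𝕡, Q = Pᶜ} :=
      hsub _ hx ∅ (Set.empty_subset _)
    obtain ⟨R, hR, hRe⟩ := hemp
    have hRuniv : R = Set.univ := by
      have := congrArg compl hRe
      simpa using this.symm
    ext S
    simp only [Set.mem_univ, iff_true]
    exact h.1 R hR S (by rw [hRuniv]; exact Set.subset_univ S)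
  · intro heq
    refine ⟨?_, ?_, ?_, ⟨fun _ => Set.univ, ?_, ?_⟩⟩
    · intro P hP Q hQ; exact ⟨Qᶜ, by rw [heq]; trivial, (compl_compl Q).symm⟩
    · intro A hA B hB; exact ⟨(A ∪ B)ᶜ, by rw [heq]; trivial, (compl_compl _).symm⟩
    · intro x; exact ⟨{x}ᶜ, by rw [heq]; trivial, (compl_compl _).symm⟩
    · intro i; exact ⟨∅, by rw [heq]; trivial, by simp⟩
    · intro P hP; exact ⟨0, Set.subset_univ P⟩
end
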